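/- arXiv:1801.03895 — 4 statements merged into one kernel-verified Lean document; each statement's English description precedes it below -/
import Mathlib

section
/- For a fixed message length m, the optimal broadcast rate of a unicast index coding problem G at locality r = 1 equals min{ a/m : an a:m coloring of the interference graph Ḡ_u exists }. -/
open Finset

/-- A unicast index coding problem on `N` receivers: receiver `i` demands message `i`
and knows messages indexed by `K i` as side information, with `i ∉ K i`. -/
structure IndexProblem (N : ℕ) where
  K : Fin N → Finset (Fin N)
  not_self : ∀ i, i ∉ K i

/-- A valid index code over alphabet `A` with message length `m` and codeword length `ℓ`:
an encoder together with query sets `R i`, such that receiver `i` can decode `x i`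
exactly from the queried codeword symbols `c_{R i}` and its side information. -/
structure IndexCode (N : ℕ) (G : IndexProblem N) (A : Type*) (m ℓ : ℕ) where
  enc : (Fin N → Fin m → A) → Fin ℓ → A
  R : Fin N → Finset (Fin ℓ)
  valid : ∀ (i : Fin N) (x y : Fin N → Fin m → A),
    (∀ t ∈ R i, enc x t = enc y t) → (∀ j ∈ G.K i, x j = y j) → x i = y i

/-- The optimal broadcast rate function `β_G^*(r)`: the infimum of broadcast rates `ℓ/m`
over all message lengths `m ≥ 1` and valid index codes with locality at most `r`. -/
noncomputable def betaStar (A : Type*) {N : ℕ} (G : IndexProblem N) (r : ℝ) : ℝ :=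
  sInf {β : ℝ | ∃ (m ℓ : ℕ) (_ : 0 < m) (C : IndexCode N G A m ℓ),
    (∀ i, ((C.R i).card : ℝ) ≤ r * m) ∧ β = (ℓ : ℝ) / m}

/-- An `a:b` coloring of the interference graph of `G`: each vertex gets a set of `b` colors
from `[a]`, and vertices joined by an edge of the interference graph (i.e. `i ≠ j` with
`i ∉ K j` or `j ∉ K i`) receive disjoint color sets. -/
def IsABColoring {N : ℕ} (G : IndexProblem N) (a b : ℕ) (C : Fin N → Finset (Fin a)) : Prop :=
  (∀ i, (C i).card = b) ∧
  ∀ i j, i ≠ j → (i ∉ G.K j ∨ j ∉ G.K i) → Disjoint (C i) (C j)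

/-- The fractional chromatic number `χ_f` of the interference graph of `G`, as the
infimum of `a/b` over all `a:b` colorings. -/
noncomputable def fracChrom {N : ℕ} (G : IndexProblem N) : ℝ :=
  sInf {q : ℝ | ∃ (a b : ℕ) (C : Fin N → Finset (Fin a)),
    0 < b ∧ IsABColoring G a b C ∧ q = (a : ℝ) / b}

-- card lower bound
lemma card_R_eq {N m ℓ : ℕ} {G : IndexProblem N} {A : Type*} [Fintype A] [DecidableEq A]
    [AddCommGroup A] (hA : 1 < Fintype.card A) (C : IndexCode N G A m ℓ)
    (hR : ∀ i, (C.R i).card ≤ m) (i : Fin N) : (C.R i).card = m := by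
  refine le_antisymm (hR i) ?_
  have hinj : Function.Injective
      (fun (v : Fin m → A) (t : (C.R i : Finset (Fin ℓ))) =>
        C.enc (fun j => if j = i then v else 0) t) := by
    intro v w h
    have := C.valid i (fun j => if j = i then v else 0) (fun j => if j = i then w else 0)
      (fun t ht => congrFun h ⟨t, ht⟩)
      (fun j hj => by
        have : j ≠ i := fun hji => G.not_self i (hji ▸ hj)
        simp [this])
    simpa using this
  have hcard := Fintype.card_le_of_injective _ hinj
  simp only [Fintype.card_fun, Fintype.card_fin, Fintype.card_coe] at hcard
  exact (Nat.pow_le_pow_iff_right hA).mp hcard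

lemma disjoint_R {N m ℓ : ℕ} {G : IndexProblem N} {A : Type*} [Fintype A] [DecidableEq A]
    [AddCommGroup A] (hA : 1 < Fintype.card A) (C : IndexCode N G A m ℓ)
    (hR : ∀ i, (C.R i).card ≤ m) (i j : Fin N) (hij : i ≠ j) (hK : i ∉ G.K j) :
    Disjoint (C.R i) (C.R j) := by
  set msg : (Fin m → A) → (Fin m → A) → (Fin N → Fin m → A) :=
    fun v w j' => if j' = i then v else if j' = j then w else 0 with hmsg
  have hinj : Function.Injective
      (fun (p : (Fin m → A) × (Fin m → A)) (t : ((C.R i ∪ C.R j : Finset (Fin ℓ)) : Finset (Fin ℓ))) =>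
        C.enc (msg p.1 p.2) t) := by
    intro ⟨v, w⟩ ⟨v', w'⟩ h
    have hj : msg v w j = msg v' w' j := by
      refine C.valid j _ _ (fun t ht => congrFun h ⟨t, mem_union_right _ ht⟩) ?_
      intro j' hj'
      have h1 : j' ≠ j := fun hc => G.not_self j (hc ▸ hj')
      have h2 : j' ≠ i := fun hc => hK (hc ▸ hj')
      simp [hmsg, h1, h2]
    have hww : w = w' := by simpa [hmsg, hij.symm] using hj
    have hi : msg v w i = msg v' w' i := by
      refine C.valid i _ _ (fun t ht => congrFun h ⟨t, mem_union_left _ ht⟩) ?_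
      intro j' hj'
      have h1 : j' ≠ i := fun hc => G.not_self i (hc ▸ hj')
      by_cases h2 : j' = j
      · simp [hmsg, h1, h2, hww, hij.symm]
      · simp [hmsg, h1, h2]
    have hvv : v = v' := by simpa [hmsg] using hi
    simp [hvv, hww]
  have hcard := Fintype.card_le_of_injective _ hinj
  simp only [Fintype.card_prod, Fintype.card_fun, Fintype.card_fin, Fintype.card_coe,
    ← pow_add] at hcard
  have hle : m + m ≤ (C.R i ∪ C.R j).card := (Nat.pow_le_pow_iff_right hA).mp hcard
  have hsum := Finset.card_union_add_card_inter (C.R i) (C.R j)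
  have := card_R_eq hA C hR i
  have := card_R_eq hA C hR j
  have hzero : (C.R i ∩ C.R j).card = 0 := by omega
  rw [Finset.card_eq_zero] at hzero
  exact Finset.disjoint_iff_inter_eq_empty.mpr hzero

lemma coloring_of_code {N m ℓ : ℕ} {G : IndexProblem N} {A : Type*} [Fintype A] [DecidableEq A]
    [AddCommGroup A] (hA : 1 < Fintype.card A) (C : IndexCode N G A m ℓ)
    (hR : ∀ i, (C.R i).card ≤ m) : IsABColoring G ℓ m C.R := by
  refine ⟨card_R_eq hA C hR, fun i j hij h => ?_⟩
  rcases h with h | h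
  · exact disjoint_R hA C hR i j hij h
  · exact (disjoint_R hA C hR j i hij.symm h).symm

noncomputable def codeOfColoring {N m a : ℕ} (G : IndexProblem N) (A : Type*) [Fintype A]
    [DecidableEq A] [AddCommGroup A] (Col : Fin N → Finset (Fin a))
    (hCol : IsABColoring G a m Col) : IndexCode N G A m a where
  enc := fun x t => ∑ i : Fin N, ∑ k : Fin m,
    if ((Col i).orderIsoOfFin (hCol.1 i) k : Fin a) = t then x i k else 0
  R := Col
  valid := by
    intro i x y h1 h2
    funext k
    set e : (i : Fin N) → Fin m → Fin a :=
      fun i k => ((Col i).orderIsoOfFin (hCol.1 i) k : Fin a) with he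
    set t : Fin a := e i k with ht
    have htmem : t ∈ Col i := ((Col i).orderIsoOfFin (hCol.1 i) k).2
    have hsum := h1 t htmem
    set d : Fin N × Fin m → A := fun p =>
      (if e p.1 p.2 = t then x p.1 p.2 else 0) - (if e p.1 p.2 = t then y p.1 p.2 else 0) with hd
    have hdzero : ∀ p : Fin N × Fin m, p ≠ (i, k) → d p = 0 := by
      rintro ⟨i', k'⟩ hp
      by_cases hc : e i' k' = t
      · have htmem' : t ∈ Col i' := hc ▸ ((Col i').orderIsoOfFin (hCol.1 i') k').2
        by_cases hii : i' = i
        · subst hii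
          have : k' = k := by
            have := Subtype.val_injective.comp ((Col i').orderIsoOfFin (hCol.1 i')).injective
              (hc.trans ht)
            exact this
          exact absurd (by rw [this]) hp
        · have hKi : i' ∈ G.K i := by
            by_contra hK
            have := hCol.2 i' i hii (Or.inl hK)
            exact (Finset.disjoint_left.mp this htmem') htmem
          simp [hd, hc, h2 i' hKi]
      · simp [hd, hc]
    have hsd : ∑ p : Fin N × Fin m, d p = 0 := by
      have : ∑ p : Fin N × Fin m, d p =
          (∑ p : Fin N × Fin m, if e p.1 p.2 = t then x p.1 p.2 else 0) -
          (∑ p : Fin N × Fin m, if e p.1 p.2 = t then y p.1 p.2 else 0) := by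
        rw [← Finset.sum_sub_distrib]
      rw [this]
      have hx : ∀ z : Fin N → Fin m → A,
          (∑ p : Fin N × Fin m, if e p.1 p.2 = t then z p.1 p.2 else 0) =
          ∑ i' : Fin N, ∑ k' : Fin m, if e i' k' = t then z i' k' else 0 := by
        intro z; rw [Fintype.sum_prod_type]
      rw [hx, hx]
      rw [sub_eq_zero]
      exact hsum
    have := Fintype.sum_eq_single (i, k) hdzero
    rw [hsd] at this
    have hone : d (i, k) = x i k - y i k := by simp [hd, ht]
    rw [hone] at this
    exact sub_eq_zero.mp this.symm


/-- for fixed message length `m`, the optimal broadcast rate at locality `r = 1`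
equals `min { a/m : an a:m coloring of the interference graph exists }`. -/
theorem betaStar_fixed_length_locality_one {N m : ℕ} (G : IndexProblem N) (A : Type*)
    [Fintype A] [DecidableEq A] [AddCommGroup A] (hA : 1 < Fintype.card A) (hm : 0 < m) :
    sInf {β : ℝ | ∃ (ℓ : ℕ) (C : IndexCode N G A m ℓ),
        (∀ i, (C.R i).card ≤ m) ∧ β = (ℓ : ℝ) / m} =
    sInf {q : ℝ | ∃ (a : ℕ) (Col : Fin N → Finset (Fin a)),
        IsABColoring G a m Col ∧ q = (a : ℝ) / m} := by
  congr 1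
  ext β
  constructor
  · rintro ⟨ℓ, C, hR, rfl⟩
    exact ⟨ℓ, C.R, coloring_of_code hA C hR, rfl⟩
  · rintro ⟨a, Col, hCol, rfl⟩
    exact ⟨a, codeOfColoring G A Col hCol,
      fun i => by rw [show ((codeOfColoring G A Col hCol).R i) = Col i from rfl, hCol.1 i], rfl⟩
end

section
/- If the subgraph of G induced by S ⊂ [N] is acyclic and there exists a valid scalar linear encoding matrix for G of codelength ℓ, then there exists a valid scalar linear index code for G of codelength ℓ in which every receiver i ∈ S has locality r_i = 1. -/
open Finset

/-- A matrix `A` fits the side information graph `G` if its diagonal entries are `1`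
and `A j i = 0` for all `i ≠ j` with `j ∉ K i`. -/
def Fits {N : ℕ} {F : Type*} [Field F] (G : IndexProblem N)
    (A : Matrix (Fin N) (Fin N) F) : Prop :=
  (∀ i, A i i = 1) ∧ ∀ i j, j ≠ i → j ∉ G.K i → A j i = 0

/-- `B` is a valid scalar linear encoding matrix for `G`: every receiver `i` can recover
`x i` from the codeword `c = x B` and its side information `(x j, j ∈ K i)`. -/
def IsValidEncMatrix {N ℓ : ℕ} {F : Type*} [Field F] (G : IndexProblem N)
    (B : Matrix (Fin N) (Fin ℓ) F) : Prop :=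
  ∀ (i : Fin N) (x y : Fin N → F),
    Matrix.vecMul x B = Matrix.vecMul y B → (∀ j ∈ G.K i, x j = y j) → x i = y i

/-- The column space of a matrix, i.e. the span of its columns. -/
def colSpace {n ℓ : ℕ} {F : Type*} [Field F] (B : Matrix (Fin n) (Fin ℓ) F) :
    Submodule F (Fin n → F) :=
  Submodule.span F (Set.range B.transpose)

/-- There is a (nonempty) closed directed walk inside the vertex set `S`, where the edges of
the side information graph are `(i, j)` with `j ∈ K i`.  Its absence is equivalent to the
induced subgraph `G_S` being a directed acyclic graph. -/
def HasDirCycleIn {N : ℕ} (K : Fin N → Finset (Fin N)) (S : Finset (Fin N)) : Prop :=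
  ∃ (n : ℕ) (v : ℕ → Fin N), 0 < n ∧ (∀ k ≤ n, v k ∈ S) ∧
    (∀ k < n, v (k + 1) ∈ K (v k)) ∧ v n = v 0

/-!
Validity of `B` at receiver `i` puts `e_i` into `col(B) + span {e_j : j ∈ K i}`: otherwise a
separating functional is a message vector that neither the codeword nor the side information
distinguishes from `0`. This yields a fitting column `a_i ∈ col(B)`. For `i ∈ S` these columns are
linearly independent, because in a vanishing combination every receiver of the support has an
in-neighbour in the support, and following in-neighbours inside a finite set closes a cycle in
`G_S`. Extending `(a_i)_{i ∈ S}` to a basis of `col(B)`, which has at most `ℓ` elements, and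
padding with zero columns gives `B'` with the same column space as `B`, hence valid.
-/

theorem Finset.exists_fin_range_subset_insert_zero {V : Type*} [Zero V] (b : Finset V) {ℓ : ℕ}
    (hb : b.card ≤ ℓ) : ∃ f : Fin ℓ → V, ↑b ⊆ Set.range f ∧ Set.range f ⊆ insert 0 ↑b := by
  refine ⟨fun t => b.toList.getD t 0, fun x hx => ?_, ?_⟩
  · obtain ⟨k, hk, rfl⟩ := List.mem_iff_getElem.mp (mem_toList.mpr hx)
    exact ⟨⟨k, (length_toList b ▸ hk).trans_le hb⟩, List.getD_eq_getElem _ _ hk⟩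
  · rintro _ ⟨t, rfl⟩
    simp only [List.getD_eq_getElem?_getD]
    cases h : b.toList[(t : ℕ)]? with
    | none => exact Set.mem_insert _ _
    | some x => exact Set.mem_insert_of_mem _ (mem_toList.mp (List.mem_of_getElem? h))

open Matrix

section LinearAlgebra

variable {N : ℕ} {F : Type*} [Field F]

theorem Submodule.exists_dotProduct_ne_zero_of_notMem {n : Type*} [Fintype n]
    {W : Submodule F (n → F)} {v : n → F} (hv : v ∉ W) :
    ∃ y : n → F, y ⬝ᵥ v ≠ 0 ∧ ∀ w ∈ W, y ⬝ᵥ w = 0 := by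
  classical
  obtain ⟨f, hfv, hfW⟩ := W.exists_dual_map_eq_bot_of_notMem hv inferInstance
  have hf : ∀ w, (dotProductEquiv F n).symm f ⬝ᵥ w = f w := fun w => by
    rw [← dotProductEquiv_apply_apply, LinearEquiv.apply_symm_apply]
  refine ⟨(dotProductEquiv F n).symm f, by rwa [hf], fun w hw => ?_⟩
  rw [hf, ← Submodule.mem_bot F, ← hfW]
  exact Submodule.mem_map_of_mem hw

theorem colSpace_eq_range_mulVecLin {ℓ : ℕ} (B : Matrix (Fin N) (Fin ℓ) F) :
    colSpace B = LinearMap.range B.mulVecLin :=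
  (range_mulVecLin B).symm

theorem vecMul_eq_zero_iff_forall_mem_colSpace {ℓ : ℕ} (x : Fin N → F)
    (B : Matrix (Fin N) (Fin ℓ) F) : x ᵥ* B = 0 ↔ ∀ w ∈ colSpace B, x ⬝ᵥ w = 0 := by
  simp [colSpace_eq_range_mulVecLin, dotProduct_mulVec, dotProduct_eq_zero_iff]

theorem vecMul_eq_vecMul_of_colSpace_le {ℓ ℓ' : ℕ} {B : Matrix (Fin N) (Fin ℓ) F}
    {B' : Matrix (Fin N) (Fin ℓ') F} (h : colSpace B ≤ colSpace B') {x y : Fin N → F}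
    (hxy : x ᵥ* B' = y ᵥ* B') : x ᵥ* B = y ᵥ* B := by
  rw [← sub_eq_zero, ← sub_vecMul, vecMul_eq_zero_iff_forall_mem_colSpace] at hxy ⊢
  exact fun w hw => hxy w (h hw)

theorem exists_matrix_colSpace_eq_of_linearIndepOn {ℓ : ℕ} {W : Submodule F (Fin N → F)}
    (hW : Module.finrank F W ≤ ℓ) {s : Set (Fin N → F)} (hs : LinearIndepOn F id s) (hsW : s ⊆ W) :
    ∃ B' : Matrix (Fin N) (Fin ℓ) F, colSpace B' = W ∧ s ⊆ Set.range B'ᵀ := by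
  obtain ⟨b, hbW, hsb, hWb, hb⟩ := exists_linearIndepOn_id_extension hs hsW
  have hb_fin : b.Finite := LinearIndependent.setFinite hb
  have hspan : Submodule.span F b = W :=
    le_antisymm (Submodule.span_le.mpr hbW) fun w hw => hWb hw
  have hcard : hb_fin.toFinset.card ≤ ℓ := by
    have := finrank_span_finset_eq_card (R := F) (s := hb_fin.toFinset) (by simpa using hb)
    rw [Set.Finite.coe_toFinset, hspan] at this
    omega
  obtain ⟨f, hbf, hf0⟩ := hb_fin.toFinset.exists_fin_range_subset_insert_zero hcard
  rw [Set.Finite.coe_toFinset] at hbf hf0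
  refine ⟨Matrix.of fun k t => f t k, le_antisymm ?_ ?_, hsb.trans hbf⟩
  · exact Submodule.span_le.mpr (hf0.trans (Set.insert_subset W.zero_mem hbW))
  · exact hspan ▸ Submodule.span_mono hbf

end LinearAlgebra

theorem IsValidEncMatrix.of_colSpace_le {N ℓ ℓ' : ℕ} {F : Type*} [Field F] {G : IndexProblem N}
    {B : Matrix (Fin N) (Fin ℓ) F} {B' : Matrix (Fin N) (Fin ℓ') F} (hB : IsValidEncMatrix G B)
    (h : colSpace B ≤ colSpace B') : IsValidEncMatrix G B' :=
  fun i x y hxy => hB i x y (vecMul_eq_vecMul_of_colSpace_le h hxy)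

theorem hasDirCycleIn_of_forall_exists_pred {N : ℕ} {K : Fin N → Finset (Fin N)}
    {S T : Finset (Fin N)} (hTS : T ⊆ S) (hT : T.Nonempty)
    (hpred : ∀ j ∈ T, ∃ i ∈ T, j ∈ K i) : HasDirCycleIn K S := by
  obtain ⟨j₀, hj₀⟩ := hT
  choose! pred hpredT hpredK using hpred
  let u : ℕ → Fin N := fun k => pred^[k] j₀
  have hu_succ : ∀ k, u (k + 1) = pred (u k) := fun k => Function.iterate_succ_apply' pred k j₀
  have huT : ∀ k, u k ∈ T := fun k => by
    induction k with
    | zero => exact hj₀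
    | succ k ih => rw [hu_succ]; exact hpredT _ ih
  obtain ⟨c, b, hcb, hu_eq⟩ :=
    Set.finite_univ.exists_lt_map_eq_of_forall_mem (f := u) fun _ => Set.mem_univ _
  -- `u` runs backwards along the edges, so the cycle is `u b, u (b - 1), …, u c = u b`.
  refine ⟨b - c, fun k => u (b - k), by omega, fun k _ => hTS (huT _), fun k hk => ?_, ?_⟩
  · have hk' : b - k = b - (k + 1) + 1 := by omega
    simp only [hk', hu_succ]
    exact hpredK _ (huT _)
  · simp only [Nat.sub_sub_self hcb.le, Nat.sub_zero, hu_eq]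

theorem linearIndepOn_of_not_hasDirCycleIn {N : ℕ} {F : Type*} [Field F] {G : IndexProblem N}
    {S : Finset (Fin N)} (hS : ¬ HasDirCycleIn G.K S) {a : Fin N → Fin N → F}
    (hai : ∀ i, a i i = 1) (haj : ∀ i j, j ≠ i → j ∉ G.K i → a i j = 0) :
    LinearIndepOn F a (S : Set (Fin N)) := by
  classical
  rw [linearIndepOn_finset_iff]
  intro g hg
  by_contra! hne
  obtain ⟨i₀, hi₀S, hi₀⟩ := hne
  refine hS (hasDirCycleIn_of_forall_exists_pred (T := S.filter (g · ≠ 0)) (filter_subset _ _)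
    ⟨i₀, mem_filter.mpr ⟨hi₀S, hi₀⟩⟩ fun j hj => ?_)
  obtain ⟨hjS, hgj⟩ := mem_filter.mp hj
  by_contra! hno
  -- coordinate `j` of `∑ g i • a i` only sees `g j`, since no `i` with `g i ≠ 0` has `j ∈ K i`
  have hcoord : ∑ i ∈ S, g i * a i j = g j := by
    rw [Finset.sum_eq_single_of_mem j hjS fun i hiS hij => ?_, hai, mul_one]
    by_cases hgi : g i = 0
    · rw [hgi, zero_mul]
    · rw [haj i j (Ne.symm hij) (hno i (mem_filter.mpr ⟨hiS, hgi⟩)), mul_zero]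
  apply hgj
  rw [← hcoord]
  simpa using congrFun hg j

theorem IsValidEncMatrix.exists_fit_column {N ℓ : ℕ} {F : Type*} [Field F] {G : IndexProblem N}
    {B : Matrix (Fin N) (Fin ℓ) F} (hB : IsValidEncMatrix G B) (i : Fin N) :
    ∃ a ∈ colSpace B, a i = 1 ∧ ∀ j, j ≠ i → j ∉ G.K i → a j = 0 := by
  let E : Submodule F (Fin N → F) := Submodule.pi (↑(G.K i))ᶜ fun _ => ⊥
  have hE : ∀ z ∈ E, ∀ j ∉ G.K i, z j = 0 := fun z hz j hj =>
    (Submodule.mem_bot F).mp (Submodule.mem_pi.mp hz j hj)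
  have hsingle : Pi.single i 1 ∈ colSpace B ⊔ E := by
    by_contra hnot
    obtain ⟨y, hyi, hy⟩ := Submodule.exists_dotProduct_ne_zero_of_notMem hnot
    have hyB : y ᵥ* B = 0 ᵥ* B := by
      rw [zero_vecMul, vecMul_eq_zero_iff_forall_mem_colSpace]
      exact fun w hw => hy w (Submodule.mem_sup_left hw)
    have hyK : ∀ j ∈ G.K i, y j = (0 : Fin N → F) j := fun j hj => by
      have hjE : Pi.single j 1 ∈ E := Submodule.mem_pi.mpr fun k hk =>
        (Submodule.mem_bot F).mpr (Pi.single_eq_of_ne (fun h : k = j => hk (h ▸ hj)) 1)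
      simpa using hy _ (Submodule.mem_sup_right hjE)
    exact hyi (by simpa using hB i y 0 hyB hyK)
  obtain ⟨b, hb, z, hz, hbz⟩ := Submodule.mem_sup.mp hsingle
  have hb_eq : b = Pi.single i 1 - z := eq_sub_of_add_eq hbz
  refine ⟨b, hb, ?_, fun j hji hjK => ?_⟩
  · simp [hb_eq, hE z hz i (G.not_self i)]
  · simp [hb_eq, hE z hz j hjK, hji]

/-- if `G_S` is acyclic and `G` admits a valid scalar linear encoding matrix of
codelength `ℓ`, then `G` admits a valid scalar linear index code of codelength `ℓ` in which
every receiver `i ∈ S` has locality `1` (the `i`-th column of the fitting matrix appears as a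
column of the encoding matrix). -/
theorem acyclic_subset_locality_one {N ℓ : ℕ} {F : Type*} [Field F]
    (G : IndexProblem N) (S : Finset (Fin N)) (hS : ¬ HasDirCycleIn G.K S)
    (B : Matrix (Fin N) (Fin ℓ) F) (hB : IsValidEncMatrix G B) :
    ∃ (B' : Matrix (Fin N) (Fin ℓ) F) (A : Matrix (Fin N) (Fin N) F),
      Fits G A ∧ colSpace A ≤ colSpace B' ∧ IsValidEncMatrix G B' ∧
      ∀ i ∈ S, ∃ t : Fin ℓ, A.transpose i = B'.transpose t := by
  choose a haB hai haj using hB.exists_fit_column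
  have hrank : Module.finrank F (colSpace B) ≤ ℓ :=
    (finrank_range_le_card Bᵀ).trans_eq (Fintype.card_fin ℓ)
  have hli : LinearIndepOn F id (a '' S) :=
    (linearIndepOn_of_not_hasDirCycleIn hS hai haj).id_image
  obtain ⟨B', hB'B, hSB'⟩ := exists_matrix_colSpace_eq_of_linearIndepOn hrank hli
    (Set.image_subset_iff.mpr fun i _ => haB i)
  refine ⟨B', Matrix.of fun j i => a i j, ⟨hai, haj⟩, ?_, hB.of_colSpace_le hB'B.ge, fun i hi => ?_⟩
  · exact hB'B ▸ Submodule.span_le.mpr (Set.range_subset_iff.mpr haB)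
  · obtain ⟨t, ht⟩ := hSB' ⟨i, hi, rfl⟩
    exact ⟨t, ht.symm⟩
end

section
/- If G is a directed cycle of length N, there exists a vector linear index coding scheme for G with message length m = N per receiver, broadcast rate β = N − 1, and locality r = 2(N−1)/N; in particular the optimal broadcast rate N − 1 is achievable with locality strictly less than 2. -/
/-
Split each message into `N` subpackets and, for subpacket `b`, broadcast the sums
`x k[b] + x (k+1)[b]` over all edges `k → k + 1` of the cycle except the edge into `b`: this is
`N (N - 1)` symbols, i.e. rate `N - 1`. Receiver `i` knows `x (i+1)`, so for `b ≠ i + 1` it reads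
`x i[b]` off the single symbol of edge `i`; for `b = i + 1`, where edge `i` is missing, it walks
once around the rest of the cycle starting from `x (i+1)[b]`, reading `N - 1` symbols. So each
receiver reads `2 (N - 1)` symbols for a message of length `N`: locality `2 (N - 1) / N`.
-/

open Finset

theorem eq_of_forall_add_succ_eq {A : Type*} [Add A] [IsLeftCancelAdd A] {u v : ℕ → A}
    {n : ℕ} (h₀ : u 0 = v 0) (h : ∀ k < n, u k + u (k + 1) = v k + v (k + 1)) : u n = v n := by
  induction n with
  | zero => exact h₀
  | succ n ih =>
    have hn : u n = v n := ih fun k hk => h k (by omega)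
    exact add_left_cancel (hn ▸ h n n.lt_succ_self)

section Cycle

open Fin.NatCast

variable {N : ℕ} [NeZero N] {A : Type*}

theorem Fin.eq_of_forall_add_one_eq [Add A] [IsLeftCancelAdd A] {u v : Fin N → A} (a : Fin N)
    (ha : u a = v a) (h : ∀ k, k + 1 ≠ a → u k + u (k + 1) = v k + v (k + 1)) : u = v := by
  -- Walk from `a` to `t = a + (t - a)`; the edge into `a` is never used on the way.
  funext t
  have hpath : ∀ k < (t - a).val, u (a + (k : Fin N)) + u (a + (k : Fin N) + 1) =
      v (a + (k : Fin N)) + v (a + (k : Fin N) + 1) := by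
    intro k hk
    refine h _ fun hk' => ?_
    have : ((k + 1 : ℕ) : Fin N) = 0 := by
      rw [Nat.cast_succ, ← add_right_inj a, ← add_assoc, hk', add_zero]
    rw [Fin.natCast_eq_zero] at this
    exact absurd (Nat.le_of_dvd (by omega) this) (by have := (t - a).isLt; omega)
  have := eq_of_forall_add_succ_eq (u := fun k : ℕ => u (a + (k : Fin N)))
    (v := fun k : ℕ => v (a + (k : Fin N))) (by simpa using ha)
    (by simpa only [Nat.cast_succ, ← add_assoc] using hpath)
  simpa only [Fin.cast_val_eq_self, add_sub_cancel] using this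

/-- Codeword positions: `⟨(b, k), _⟩` carries the `b`-th subpacket of the edge sum
`x k + x (k + 1)`; subpacket `b` leaves out the edge `b - 1 → b`. -/
abbrev CyclePos (N : ℕ) [NeZero N] := {p : Fin N × Fin N // p.2 + 1 ≠ p.1}

def cycleEnc [Add A] (x : Fin N → Fin N → A) (p : CyclePos N) : A :=
  x p.1.2 p.1.1 + x (p.1.2 + 1) p.1.1

def cycleQuery (i : Fin N) : Finset (CyclePos N) := {p | p.1.2 = i ∨ p.1.1 = i + 1}

theorem card_cyclePos : Fintype.card (CyclePos N) = N * (N - 1) := by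
  have hskipped : Fintype.card {p : Fin N × Fin N // p.2 + 1 = p.1} = N := by
    refine (Fintype.card_congr ?_).trans (Fintype.card_fin N)
    exact
      { toFun := fun p => p.1.2
        invFun := fun k => ⟨(k + 1, k), rfl⟩
        left_inv := fun p => Subtype.ext (Prod.ext p.2 rfl)
        right_inv := fun _ => rfl }
  rw [Fintype.card_subtype_compl, hskipped, Fintype.card_prod, Fintype.card_fin, Nat.mul_sub_one]

theorem card_cycleQuery_le (i : Fin N) : #(cycleQuery i) ≤ 2 * (N - 1) := by
  have hedge : #({p | p.1.2 = i} : Finset (CyclePos N)) ≤ #(univ.erase (i + 1)) := by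
    refine card_le_card_of_injOn (fun p => p.1.1) (fun p hp => mem_erase.2 ⟨?_, mem_univ _⟩) ?_
    · exact fun h => p.2 ((mem_filter.1 hp).2 ▸ h.symm)
    · exact fun p hp q hq h =>
        Subtype.ext (Prod.ext h ((mem_filter.1 hp).2.trans (mem_filter.1 hq).2.symm))
  have hcoord : #({p | p.1.1 = i + 1} : Finset (CyclePos N)) ≤ #(univ.erase i) := by
    refine card_le_card_of_injOn (fun p => p.1.2) (fun p hp => mem_erase.2 ⟨?_, mem_univ _⟩) ?_
    · exact fun h => p.2 ((mem_filter.1 hp).2 ▸ h ▸ rfl)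
    · exact fun p hp q hq h =>
        Subtype.ext (Prod.ext ((mem_filter.1 hp).2.trans (mem_filter.1 hq).2.symm) h)
  have hunion : #(cycleQuery i) ≤
      #({p | p.1.2 = i} : Finset (CyclePos N)) + #({p | p.1.1 = i + 1} : Finset (CyclePos N)) := by
    rw [cycleQuery, filter_or]
    exact card_union_le _ _
  simp only [card_erase_of_mem (mem_univ _), card_univ, Fintype.card_fin] at hedge hcoord
  omega

theorem eq_of_cycleEnc_eq [Add A] [IsCancelAdd A] {i : Fin N} {x y : Fin N → Fin N → A}
    (henc : ∀ p ∈ cycleQuery i, cycleEnc x p = cycleEnc y p) (hside : x (i + 1) = y (i + 1)) :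
    x i = y i := by
  funext b
  by_cases hb : b = i + 1
  · subst hb
    refine congrFun (Fin.eq_of_forall_add_one_eq (u := fun k => x k (i + 1))
      (v := fun k => y k (i + 1)) (i + 1) (congrFun hside _) fun k hk => ?_) i
    exact henc ⟨(i + 1, k), hk⟩ (mem_filter.2 ⟨mem_univ _, Or.inr rfl⟩)
  · have hi := henc ⟨(b, i), Ne.symm hb⟩ (mem_filter.2 ⟨mem_univ _, Or.inl rfl⟩)
    exact add_right_cancel (b := x (i + 1) b) (by simpa only [cycleEnc, congrFun hside b] using hi)

noncomputable def cycleCode [Add A] [IsCancelAdd A] (G : IndexProblem N)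
    (hG : ∀ i, i + 1 ∈ G.K i) : IndexCode N G A N (N * (N - 1)) where
  enc x t := cycleEnc x ((Fintype.equivFinOfCardEq card_cyclePos).symm t)
  R i := (cycleQuery i).map (Fintype.equivFinOfCardEq card_cyclePos).toEmbedding
  valid i x y henc hside := eq_of_cycleEnc_eq
    (fun p hp => by simpa using henc _ (mem_map_of_mem _ hp)) (hside _ (hG i))

theorem card_cycleCode_R_le [Add A] [IsCancelAdd A] (G : IndexProblem N)
    (hG : ∀ i, i + 1 ∈ G.K i) (i : Fin N) : #((cycleCode (A := A) G hG).R i) ≤ 2 * (N - 1) :=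
  (card_map _).trans_le (card_cycleQuery_le i)

end Cycle

theorem betaStar_le_of_indexCode {A : Type*} {N m ℓ : ℕ} {G : IndexProblem N} {r : ℝ}
    (C : IndexCode N G A m ℓ) (hm : 0 < m) (hC : ∀ i, (#(C.R i) : ℝ) ≤ r * m) :
    betaStar A G r ≤ ℓ / m :=
  csInf_le ⟨0, by rintro _ ⟨m, ℓ, -, -, -, rfl⟩; positivity⟩ ⟨m, ℓ, hm, C, hC, rfl⟩

/-- if `G` is the directed `N`-cycle (receiver `i` knows `x_{i mod N + 1}`),
then there is a vector linear index code for `G` over a finite field `F` with message length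
`m = N`, broadcast rate `β = N − 1` (codeword length `N(N−1)`), and locality `r = 2(N−1)/N`;
in particular the optimal rate `N − 1` is achieved with locality strictly less than `2`. -/
theorem cycle_locality (N : ℕ) (hN : 2 ≤ N) (G : IndexProblem N)
    (hK : ∀ i : Fin N, G.K i = {⟨(i.val + 1) % N, Nat.mod_lt _ (by omega)⟩})
    (F : Type*) [Field F] :
    (∃ C : IndexCode N G F N (N * (N - 1)), ∀ i,
        ((C.R i).card : ℝ) ≤ 2 * ((N : ℝ) - 1)) ∧
    betaStar F G (2 * ((N : ℝ) - 1) / N) ≤ (N : ℝ) - 1 ∧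
    2 * ((N : ℝ) - 1) / N < 2 := by
  have : NeZero N := ⟨by omega⟩
  have hNpos : (0 : ℝ) < N := by positivity
  have hsucc : ∀ i : Fin N, i + 1 ∈ G.K i := fun i => by
    rw [hK i, mem_singleton]
    ext
    simp [Fin.val_add]
  have hloc : ∀ i, (#((cycleCode (A := F) G hsucc).R i) : ℝ) ≤ 2 * ((N : ℝ) - 1) := fun i => by
    have := Nat.cast_le (α := ℝ).2 (card_cycleCode_R_le (A := F) G hsucc i)
    rwa [Nat.cast_mul, Nat.cast_sub (by omega), Nat.cast_ofNat, Nat.cast_one] at this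
  refine ⟨⟨_, hloc⟩, ?_, by rw [div_lt_iff₀ hNpos]; linarith⟩
  calc betaStar F G (2 * ((N : ℝ) - 1) / N)
      ≤ ((N * (N - 1) : ℕ) : ℝ) / N :=
        betaStar_le_of_indexCode _ (by omega) fun i => by
          rw [div_mul_cancel₀ _ hNpos.ne']; exact hloc i
    _ = N - 1 := by
      rw [Nat.cast_mul, Nat.cast_sub (by omega), Nat.cast_one, mul_div_cancel_left₀ _ hNpos.ne']
end

section
/- If a set of M matrices B_1,...,B_M ∈ F_q^{N×ℓ} is (M,Q)-balanced for G, then time-sharing the M scalar linear codes with equal shares yields a vector linear index code with broadcast rate ℓ and locality at most (Q + (M−Q)ℓ)/M = ℓ − Q(ℓ−1)/M; hence β_G*((Q + (M−Q)ℓ)/M) ≤ ℓ. -/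
/-!
Under the scalar linear code `B_j`, receiver `i` recovers `x_i` from `(x A_j)_i`: as `A_j` fits
`G`, this is `x_i` plus a combination of side information. Since the `i`-th column of `A_j` lies
in the column space of `B_j`, `(x A_j)_i` is a combination of the codeword symbols `(x B_j)_t`,
where one symbol suffices when that column is a column of `B_j`. Sending the `j`-th symbol of
every message with `B_j` gives a code of length `Mℓ` in which receiver `i` reads one symbol for
at least `Q` of the codes and at most `ℓ` for the others.
-/

open Finset

open Classical

open Matrix

theorem Finset.sum_le_add_card_sub_mul {ι : Type*} [Fintype ι] (f : ι → ℕ) (s : Finset ι)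
    {Q ℓ : ℕ} (hQ : Q ≤ s.card) (hs : ∀ j ∈ s, f j ≤ 1) (hf : ∀ j, f j ≤ ℓ) :
    ∑ j, f j ≤ Q + (Fintype.card ι - Q) * ℓ := by
  obtain ⟨t, hts, rfl⟩ := Finset.exists_subset_card_eq hQ
  rw [← Finset.sum_add_sum_compl t, ← Finset.card_compl]
  gcongr
  · simpa using Finset.sum_le_card_nsmul t f 1 fun j hj => hs j (hts hj)
  · simpa using Finset.sum_le_card_nsmul tᶜ f ℓ fun j _ => hf j

theorem dotProduct_eq_of_mem_span {n : Type*} [Fintype n] {F : Type*} [Field F]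
    {s : Set (n → F)} {x y v : n → F} (hs : ∀ w ∈ s, x ⬝ᵥ w = y ⬝ᵥ w)
    (hv : v ∈ Submodule.span F s) : x ⬝ᵥ v = y ⬝ᵥ v :=
  LinearMap.eqOn_span (f := dotProductBilin F F x) (g := dotProductBilin F F y) hs hv

theorem Fits.eq_of_dotProduct_col_eq {N : ℕ} {F : Type*} [Field F] {G : IndexProblem N}
    {A : Matrix (Fin N) (Fin N) F} (hA : Fits G A) {i : Fin N} {x y : Fin N → F}
    (hK : ∀ k ∈ G.K i, x k = y k) (hxy : x ⬝ᵥ Aᵀ i = y ⬝ᵥ Aᵀ i) : x i = y i := by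
  have : (x - y) ⬝ᵥ Aᵀ i = x i - y i := by
    rw [dotProduct, Finset.sum_eq_single i]
    · simp [hA.1 i]
    · intro k _ hki
      by_cases hk : k ∈ G.K i
      · simp [hK k hk]
      · simp [hA.2 i k hki hk]
    · simp
  rwa [sub_dotProduct, hxy, sub_self, eq_comm, sub_eq_zero] at this

theorem Fits.eq_of_vecMul_eqOn {N ℓ : ℕ} {F : Type*} [Field F] {G : IndexProblem N}
    {A : Matrix (Fin N) (Fin N) F} (hA : Fits G A) {B : Matrix (Fin N) (Fin ℓ) F}
    {i : Fin N} {S : Finset (Fin ℓ)} (hS : Aᵀ i ∈ Submodule.span F (Bᵀ '' S))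
    {x y : Fin N → F} (hxy : ∀ t ∈ S, (x ᵥ* B) t = (y ᵥ* B) t)
    (hK : ∀ k ∈ G.K i, x k = y k) : x i = y i := by
  refine hA.eq_of_dotProduct_col_eq hK (dotProduct_eq_of_mem_span ?_ hS)
  rintro _ ⟨t, ht, rfl⟩
  exact hxy t ht

theorem betaStar_le_div {N m ℓ : ℕ} {A : Type*} {G : IndexProblem N} {r : ℝ} (hm : 0 < m)
    (C : IndexCode N G A m ℓ) (hC : ∀ i, ((C.R i).card : ℝ) ≤ r * m) :
    betaStar A G r ≤ ℓ / m :=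
  csInf_le ⟨0, by rintro _ ⟨_, _, _, _, -, rfl⟩; positivity⟩ ⟨m, ℓ, hm, C, hC, rfl⟩

namespace IndexCode

variable {N : ℕ} {G : IndexProblem N}

def ofMatrix {ℓ : ℕ} {F : Type*} [Field F] (B : Matrix (Fin N) (Fin ℓ) F)
    (R : Fin N → Finset (Fin ℓ))
    (hR : ∀ i x y, (∀ t ∈ R i, (x ᵥ* B) t = (y ᵥ* B) t) → (∀ k ∈ G.K i, x k = y k) → x i = y i) :
    IndexCode N G F 1 ℓ where
  enc x := (fun n => x n 0) ᵥ* B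
  R := R
  valid i x y hxy hK := funext fun u => by
    rw [Subsingleton.elim u 0]
    exact hR i (fun n => x n 0) (fun n => y n 0) hxy fun k hk => congrFun (hK k hk) 0

def timeShare {M ℓ : ℕ} {A : Type*} (C : Fin M → IndexCode N G A 1 ℓ) :
    IndexCode N G A M (M * ℓ) where
  enc x k := (C (finProdFinEquiv.symm k).1).enc (fun n _ => x n (finProdFinEquiv.symm k).1)
    (finProdFinEquiv.symm k).2
  R i := (Finset.univ.sigma fun j => (C j).R i).map
    ((Equiv.sigmaEquivProd (Fin M) (Fin ℓ)).trans finProdFinEquiv).toEmbedding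
  valid i x y hxy hK := funext fun j => by
    refine congrFun ((C j).valid i (fun n _ => x n j) (fun n _ => y n j) (fun t ht => ?_)
      fun k hk => funext fun _ => congrFun (hK k hk) j) 0
    simpa using hxy (finProdFinEquiv (j, t)) (by simpa using ht)

theorem card_R_timeShare {M ℓ : ℕ} {A : Type*} (C : Fin M → IndexCode N G A 1 ℓ) (i : Fin N) :
    ((timeShare C).R i).card = ∑ j, ((C j).R i).card := by
  simp [timeShare]

end IndexCode

/-- The codeword coordinates that receiver `i` queries under the scalar code `B`. -/
noncomputable def localSet {N ℓ : ℕ} {F : Type*} [Field F] (A : Matrix (Fin N) (Fin N) F)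
    (B : Matrix (Fin N) (Fin ℓ) F) (i : Fin N) : Finset (Fin ℓ) :=
  if h : ∃ t, Aᵀ i = Bᵀ t then {h.choose} else Finset.univ

theorem col_mem_span_localSet {N ℓ : ℕ} {F : Type*} [Field F] {A : Matrix (Fin N) (Fin N) F}
    {B : Matrix (Fin N) (Fin ℓ) F} (hcol : colSpace A = colSpace B) (i : Fin N) :
    Aᵀ i ∈ Submodule.span F (Bᵀ '' localSet A B i) := by
  unfold localSet
  split_ifs with h
  · exact Submodule.subset_span ⟨h.choose, by simp, h.choose_spec.symm⟩
  · have : Aᵀ i ∈ colSpace B := hcol ▸ Submodule.subset_span ⟨i, rfl⟩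
    exact Submodule.span_mono (by rintro _ ⟨t, rfl⟩; exact ⟨t, by simp, rfl⟩) this

theorem card_localSet_le_one {N ℓ : ℕ} {F : Type*} [Field F] {A : Matrix (Fin N) (Fin N) F}
    {B : Matrix (Fin N) (Fin ℓ) F} {i : Fin N} (h : ∃ t, Aᵀ i = Bᵀ t) :
    (localSet A B i).card ≤ 1 := by
  simp [localSet, h]

/-- if `B_1, …, B_M` is an `(M,Q)`-balanced set of matrices for `G` (each with
a fitting matrix `A_j` of identical column space, and each receiver `i` having at least `Q`
indices `j` for which the `i`-th column of `A_j` is a column of `B_j`), then time-sharing the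
`M` scalar linear codes equally yields a vector linear index code with broadcast rate `ℓ` and
locality at most `(Q + (M−Q)ℓ)/M = ℓ − Q(ℓ−1)/M`; hence `β_G^*((Q + (M−Q)ℓ)/M) ≤ ℓ`. -/
theorem balanced_set_theorem {N M Q ℓ : ℕ} {F : Type*} [Field F]
    (G : IndexProblem N) (hM : 0 < M)
    (B : Fin M → Matrix (Fin N) (Fin ℓ) F) (A : Fin M → Matrix (Fin N) (Fin N) F)
    (hfit : ∀ j, Fits G (A j))
    (hcol : ∀ j, colSpace (A j) = colSpace (B j))
    (hQ : ∀ i : Fin N,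
      Q ≤ (Finset.univ.filter fun j => ∃ t : Fin ℓ, (A j).transpose i = (B j).transpose t).card) :
    ((Q : ℝ) + ((M : ℝ) - Q) * ℓ) / M = (ℓ : ℝ) - Q * ((ℓ : ℝ) - 1) / M ∧
    (∃ C : IndexCode N G F M (M * ℓ), ∀ i,
        ((C.R i).card : ℝ) ≤ (Q : ℝ) + ((M : ℝ) - Q) * ℓ) ∧
    betaStar F G (((Q : ℝ) + ((M : ℝ) - Q) * ℓ) / M) ≤ ℓ := by
  let C := IndexCode.timeShare fun j => IndexCode.ofMatrix (G := G) (B j) (localSet (A j) (B j))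
    fun i _ _ => (hfit j).eq_of_vecMul_eqOn (col_mem_span_localSet (hcol j) i)
  have hC : ∀ i, ((C.R i).card : ℝ) ≤ (Q : ℝ) + ((M : ℝ) - Q) * ℓ := fun i => by
    have hQM : Q ≤ M := (hQ i).trans ((Finset.card_filter_le _ _).trans_eq (by simp))
    have := Finset.sum_le_add_card_sub_mul _ _ (hQ i)
      (fun j hj => card_localSet_le_one (Finset.mem_filter.1 hj).2)
      fun j => (card_le_univ _).trans_eq (Fintype.card_fin ℓ)
    rw [Fintype.card_fin] at this
    rw [IndexCode.card_R_timeShare, ← Nat.cast_sub hQM]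
    exact_mod_cast this
  have hM' : (M : ℝ) ≠ 0 := by positivity
  refine ⟨by field_simp; ring, ⟨C, hC⟩, ?_⟩
  calc betaStar F G _ ≤ ((M * ℓ : ℕ) : ℝ) / M :=
        betaStar_le_div hM C fun i => by rw [div_mul_cancel₀ _ hM']; exact hC i
    _ = ℓ := by push_cast; field_simp
end
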